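/- Let g : ℝ^m → ℝ ∪ {∞} be a proper convex lower semicontinuous function and let A : ℝ^n → ℝ^m be a linear map satisfying Aᵀ A = α·Id for some constant α > 0. Define approx_f : ℝ^n → ℝ^n by approx_f(x) = α⁻¹ Aᵀ prox_{αg}(Ax). Then approx_f is non-expansive: for all y, y′ ∈ ℝ^n, ‖approx_f(y) − approx_f(y′)‖ ≤ ‖y − y′‖. -/

import Mathlib

noncomputable section

/-- `p` is a proximal point of the extended-real-valued function `h` at `x`,
i.e. `p` minimizes `u ↦ h u + (1/2)‖u − x‖²`. -/
def IsProxPt {E : Type*} [NormedAddCommGroup E] [InnerProductSpace ℝ E]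
    (h : E → EReal) (x p : E) : Prop :=
  ∀ u : E,
    h p + (((1 : ℝ) / 2 * ‖p - x‖ ^ 2 : ℝ) : EReal) ≤
      h u + (((1 : ℝ) / 2 * ‖u - x‖ ^ 2 : ℝ) : EReal)

/-- `g` is proper, convex and lower semicontinuous (values in `ℝ ∪ {∞}`). -/
def ProperConvexLSC {E : Type*} [NormedAddCommGroup E] [InnerProductSpace ℝ E]
    (g : E → EReal) : Prop :=
  (∃ x, g x ≠ ⊤) ∧ (∀ x, g x ≠ ⊥) ∧ LowerSemicontinuous g ∧
    ∀ x y : E, ∀ a b : ℝ, 0 ≤ a → 0 ≤ b → a + b = 1 →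
      g (a • x + b • y) ≤ (a : EReal) * g x + (b : EReal) * g y

/-!
On its effective domain `α g` is a real convex function, and minimality of the prox point `p` of
`x` against the points of a segment `[p, q]` gives the variational inequality
`⟪x - p, q - p⟫ ≤ α g q - α g p`. Adding this inequality at two prox points shows that the prox
map is firmly nonexpansive, hence `1`-Lipschitz. Finally `Aᵀ A = α • id` says that `A` scales
norms by `√α`, and forces `‖Aᵀ v‖ ≤ √α ‖v‖`, so `α⁻¹ Aᵀ ∘ prox ∘ A` is again `1`-Lipschitz.
-/

open Filter Topology
open scoped RealInnerProductSpace

section Prox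

variable {E : Type*} [NormedAddCommGroup E] [InnerProductSpace ℝ E]

theorem ConvexOn.inner_sub_le_of_isMinOn_add_half_norm_sq {s : Set E} {φ : E → ℝ}
    (hφ : ConvexOn ℝ s φ) {x p q : E} (hp : p ∈ s) (hq : q ∈ s)
    (hmin : IsMinOn (fun u => φ u + 1 / 2 * ‖u - x‖ ^ 2) s p) :
    ⟪x - p, q - p⟫ ≤ φ q - φ p := by
  -- compare `p` with `p + t • (q - p)` and let `t → 0⁺`
  have hstep : ∀ t : ℝ, 0 < t → t ≤ 1 →
      ⟪x - p, q - p⟫ ≤ φ q - φ p + t * (1 / 2 * ‖q - p‖ ^ 2) := by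
    intro t ht0 ht1
    have hu : (1 - t) • p + t • q = p + t • (q - p) := by module
    have hmem : (1 - t) • p + t • q ∈ s := hφ.1 hp hq (by linarith) ht0.le (by ring)
    have hconv := hφ.2 hp hq (by linarith : 0 ≤ 1 - t) ht0.le (by ring)
    have hle := isMinOn_iff.mp hmin _ hmem
    simp only [smul_eq_mul, hu] at hconv hle
    have hexp : ‖p + t • (q - p) - x‖ ^ 2
        = ‖p - x‖ ^ 2 - 2 * t * ⟪x - p, q - p⟫ + t ^ 2 * ‖q - p‖ ^ 2 := by
      rw [show p + t • (q - p) - x = (p - x) + t • (q - p) by abel, norm_add_sq_real,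
        real_inner_smul_right, norm_smul, mul_pow, Real.norm_eq_abs, sq_abs,
        ← neg_sub x p, inner_neg_left]
      ring
    rw [hexp] at hle
    nlinarith
  have hlim : Tendsto (fun t : ℝ => φ q - φ p + t * (1 / 2 * ‖q - p‖ ^ 2)) (𝓝[>] 0)
      (𝓝 (φ q - φ p)) := by
    refine tendsto_nhdsWithin_of_tendsto_nhds (Continuous.tendsto' ?_ _ _ (by simp))
    fun_prop
  refine ge_of_tendsto hlim ?_
  filter_upwards [Ioc_mem_nhdsGT one_pos] with t ht using hstep t ht.1 ht.2

theorem ConvexOn.norm_sub_sq_le_inner_of_isMinOn_add_half_norm_sq {s : Set E} {φ : E → ℝ}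
    (hφ : ConvexOn ℝ s φ) {x y p q : E} (hp : p ∈ s) (hq : q ∈ s)
    (hminp : IsMinOn (fun u => φ u + 1 / 2 * ‖u - x‖ ^ 2) s p)
    (hminq : IsMinOn (fun u => φ u + 1 / 2 * ‖u - y‖ ^ 2) s q) :
    ‖p - q‖ ^ 2 ≤ ⟪x - y, p - q⟫ := by
  have hpq := hφ.inner_sub_le_of_isMinOn_add_half_norm_sq hp hq hminp
  have hqp := hφ.inner_sub_le_of_isMinOn_add_half_norm_sq hq hp hminq
  have hsplit : ⟪x - y, p - q⟫ = ‖p - q‖ ^ 2 - ⟪x - p, q - p⟫ - ⟪y - q, p - q⟫ := by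
    rw [show x - y = (x - p) - (y - q) + (p - q) by abel, inner_add_left, inner_sub_left,
      real_inner_self_eq_norm_sq, ← neg_sub p q, inner_neg_right]
    ring
  linarith

theorem ConvexOn.norm_sub_le_of_isMinOn_add_half_norm_sq {s : Set E} {φ : E → ℝ}
    (hφ : ConvexOn ℝ s φ) {x y p q : E} (hp : p ∈ s) (hq : q ∈ s)
    (hminp : IsMinOn (fun u => φ u + 1 / 2 * ‖u - x‖ ^ 2) s p)
    (hminq : IsMinOn (fun u => φ u + 1 / 2 * ‖u - y‖ ^ 2) s q) :
    ‖p - q‖ ≤ ‖x - y‖ := by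
  have hfirm := hφ.norm_sub_sq_le_inner_of_isMinOn_add_half_norm_sq hp hq hminp hminq
  have hcs := real_inner_le_norm (x - y) (p - q)
  nlinarith [norm_nonneg (p - q), norm_nonneg (x - y)]

variable {h : E → EReal} {x p : E}

theorem IsProxPt.ne_top (hbot : ∀ u, h u ≠ ⊥) (hdom : ∃ u, h u ≠ ⊤) (hp : IsProxPt h x p) :
    h p ≠ ⊤ := by
  obtain ⟨u, hu⟩ := hdom
  intro htop
  have hle := hp u
  rw [htop, EReal.top_add_coe, ← EReal.coe_toReal hu (hbot u), ← EReal.coe_add] at hle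
  exact EReal.coe_ne_top _ (top_le_iff.mp hle)

theorem IsProxPt.isMinOn_toReal (hbot : ∀ u, h u ≠ ⊥) (hp : IsProxPt h x p) (hpt : h p ≠ ⊤) :
    IsMinOn (fun u => (h u).toReal + 1 / 2 * ‖u - x‖ ^ 2) {u | h u ≠ ⊤} p := by
  refine isMinOn_iff.mpr fun u hu => ?_
  have hle := hp u
  rw [← EReal.coe_toReal hpt (hbot p), ← EReal.coe_toReal hu (hbot u), ← EReal.coe_add,
    ← EReal.coe_add, EReal.coe_le_coe_iff] at hle
  exact hle

theorem lipschitzWith_one_of_isProxPt (hbot : ∀ u, h u ≠ ⊥) (hdom : ∃ u, h u ≠ ⊤)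
    (hconv : ConvexOn ℝ {u | h u ≠ ⊤} fun u => (h u).toReal) {P : E → E}
    (hP : ∀ x, IsProxPt h x (P x)) : LipschitzWith 1 P := by
  refine LipschitzWith.mk_one fun x y => ?_
  have hx := (hP x).ne_top hbot hdom
  have hy := (hP y).ne_top hbot hdom
  simpa only [dist_eq_norm] using hconv.norm_sub_le_of_isMinOn_add_half_norm_sq hx hy
    ((hP x).isMinOn_toReal hbot hx) ((hP y).isMinOn_toReal hbot hy)

theorem convexOn_toReal_of_ne_bot {g : E → EReal} (hbot : ∀ x, g x ≠ ⊥)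
    (hconv : ∀ x y : E, ∀ a b : ℝ, 0 ≤ a → 0 ≤ b → a + b = 1 →
      g (a • x + b • y) ≤ (a : EReal) * g x + (b : EReal) * g y) :
    ConvexOn ℝ {x | g x ≠ ⊤} fun x => (g x).toReal := by
  have hle : ∀ x, g x ≠ ⊤ → ∀ y, g y ≠ ⊤ → ∀ a b : ℝ, 0 ≤ a → 0 ≤ b → a + b = 1 →
      g (a • x + b • y) ≤ ((a * (g x).toReal + b * (g y).toReal : ℝ) : EReal) := by
    intro x hx y hy a b ha hb hab
    rw [EReal.coe_add, EReal.coe_mul, EReal.coe_mul, EReal.coe_toReal hx (hbot x),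
      EReal.coe_toReal hy (hbot y)]
    exact hconv x y a b ha hb hab
  refine ⟨fun x hx y hy a b ha hb hab =>
    ne_top_of_le_ne_top (EReal.coe_ne_top _) (hle x hx y hy a b ha hb hab),
    fun x hx y hy a b ha hb hab => ?_⟩
  simpa only [EReal.toReal_coe, smul_eq_mul] using
    EReal.toReal_le_toReal (hle x hx y hy a b ha hb hab) (hbot _) (EReal.coe_ne_top _)

end Prox

section Adjoint

variable {E F : Type*} [NormedAddCommGroup E] [InnerProductSpace ℝ E] [CompleteSpace E]
  [NormedAddCommGroup F] [InnerProductSpace ℝ F] [CompleteSpace F]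
  {A : E →L[ℝ] F} {α : ℝ}

theorem norm_apply_sq_of_adjoint_comp_self_eq_smul
    (hA : (ContinuousLinearMap.adjoint A).comp A = α • ContinuousLinearMap.id ℝ E) (z : E) :
    ‖A z‖ ^ 2 = α * ‖z‖ ^ 2 := by
  rw [← real_inner_self_eq_norm_sq, ← ContinuousLinearMap.adjoint_inner_left,
    ← ContinuousLinearMap.comp_apply, hA]
  simp [real_inner_smul_left]

theorem norm_adjoint_apply_sq_le_of_adjoint_comp_self_eq_smul (hα : 0 ≤ α)
    (hA : (ContinuousLinearMap.adjoint A).comp A = α • ContinuousLinearMap.id ℝ E) (v : F) :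
    ‖ContinuousLinearMap.adjoint A v‖ ^ 2 ≤ α * ‖v‖ ^ 2 := by
  set w := ContinuousLinearMap.adjoint A v
  have hcs : ‖w‖ ^ 2 ≤ ‖v‖ * ‖A w‖ := by
    rw [← real_inner_self_eq_norm_sq, ContinuousLinearMap.adjoint_inner_left]
    exact real_inner_le_norm v (A w)
  rcases (norm_nonneg w).eq_or_lt with hw | hw
  · rw [← hw, zero_pow two_ne_zero]
    positivity
  · have hsq : ‖w‖ ^ 2 * ‖w‖ ^ 2 ≤ ‖w‖ ^ 2 * (α * ‖v‖ ^ 2) := by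
      calc ‖w‖ ^ 2 * ‖w‖ ^ 2 ≤ (‖v‖ * ‖A w‖) ^ 2 := by nlinarith
        _ = ‖w‖ ^ 2 * (α * ‖v‖ ^ 2) := by
          rw [mul_pow, norm_apply_sq_of_adjoint_comp_self_eq_smul hA w]; ring
    exact le_of_mul_le_mul_left hsq (by positivity)

theorem LipschitzWith.inv_smul_adjoint_comp (hα : 0 < α)
    (hA : (ContinuousLinearMap.adjoint A).comp A = α • ContinuousLinearMap.id ℝ E) {T : F → F}
    (hT : LipschitzWith 1 T) :
    LipschitzWith 1 fun y => α⁻¹ • ContinuousLinearMap.adjoint A (T (A y)) := by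
  refine LipschitzWith.mk_one fun y y' => ?_
  rw [dist_eq_norm, dist_eq_norm, ← smul_sub, ← map_sub]
  have hTle : ‖T (A y) - T (A y')‖ ≤ ‖A y - A y'‖ := by simpa using hT.norm_sub_le (A y) (A y')
  refine (pow_le_pow_iff_left₀ (norm_nonneg _) (norm_nonneg _) two_ne_zero).mp ?_
  calc ‖α⁻¹ • ContinuousLinearMap.adjoint A (T (A y) - T (A y'))‖ ^ 2
      ≤ α⁻¹ ^ 2 * (α * ‖T (A y) - T (A y')‖ ^ 2) := by
        rw [norm_smul, mul_pow, Real.norm_eq_abs, sq_abs]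
        gcongr
        exact norm_adjoint_apply_sq_le_of_adjoint_comp_self_eq_smul hα.le hA _
    _ ≤ α⁻¹ ^ 2 * (α * ‖A y - A y'‖ ^ 2) := by gcongr
    _ = ‖y - y'‖ ^ 2 := by
        rw [← map_sub, norm_apply_sq_of_adjoint_comp_self_eq_smul hA]
        field_simp

end Adjoint

theorem statement5 (n m : ℕ)
    (g : EuclideanSpace ℝ (Fin m) → EReal) (hg : ProperConvexLSC g)
    (A : EuclideanSpace ℝ (Fin n) →L[ℝ] EuclideanSpace ℝ (Fin m))
    (α : ℝ) (hα : 0 < α)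
    (hA : (ContinuousLinearMap.adjoint A).comp A =
      α • ContinuousLinearMap.id ℝ (EuclideanSpace ℝ (Fin n)))
    (P : EuclideanSpace ℝ (Fin m) → EuclideanSpace ℝ (Fin m))
    (hP : ∀ x, IsProxPt (fun z => (α : EReal) * g z) x (P x)) :
    ∀ y y' : EuclideanSpace ℝ (Fin n),
      ‖α⁻¹ • (ContinuousLinearMap.adjoint A) (P (A y)) -
          α⁻¹ • (ContinuousLinearMap.adjoint A) (P (A y'))‖ ≤ ‖y - y'‖ := by
  obtain ⟨⟨u, hu⟩, hbot, -, hconv⟩ := hg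
  have hdom : {z | (α : EReal) * g z ≠ ⊤} = {z | g z ≠ ⊤} := by
    ext z
    simp [EReal.mul_eq_top, hα, hbot z]
  have hP_lip : LipschitzWith 1 P := by
    refine lipschitzWith_one_of_isProxPt (fun z => ?_) ⟨u, ?_⟩ ?_ hP
    · simp [EReal.mul_eq_bot, hα, hα.not_gt, hbot z]
    · simp [EReal.mul_eq_top, hα, hα.not_gt, hu, hbot u]
    · rw [hdom]
      simpa [EReal.toReal_mul] using (convexOn_toReal_of_ne_bot hbot hconv).smul hα.le
  intro y y'
  simpa using (hP_lip.inv_smul_adjoint_comp hα hA).norm_sub_le y y'
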